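/- arXiv:2008.05033 — 2 statements merged into one kernel-verified Lean document; each statement's English description precedes it below -/
import Mathlib

section
/- Soundness of the trusted-center protocol: for any POVM {Π_{x,z}}_{x,z ∈ {0,1}^N} on (ℂ²)^⊗N, the acceptance probability (1/2)∑_{h}(1/2^N)∑_{m}∑_{x,z} ⟨m|(H^⊗N)^h Π_{x,z} (H^⊗N)^h|m⟩ · ∑_{i<j} p_{i,j}(1 − s_{i,j}(−1)^{m_i'+m_j'})/2, where m_i' := m_i ⊕ (h z_i + (1−h) x_i), equals Tr[(I^⊗N − 𝓗) σ] for the density operator σ := (1/2^N) ∑_{x,z} X^x Z^z Π_{x,z} Z^z X^x. Consequently, if the ground energy of 𝓗 is at least β then the acceptance probability is at most 1 − β. -/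
open Matrix Finset Kronecker BigOperators ComplexOrder

noncomputable section

/-- Pauli X matrix. -/
def Xm : Matrix (Fin 2) (Fin 2) ℂ := !![0, 1; 1, 0]
/-- Pauli Z matrix. -/
def Zm : Matrix (Fin 2) (Fin 2) ℂ := !![1, 0; 0, -1]
/-- Hadamard matrix. -/
def Hm : Matrix (Fin 2) (Fin 2) ℂ := (Real.sqrt 2 : ℂ)⁻¹ • !![1, 1; 1, -1]

/-- Tensor product of a family of one-qubit operators, as an operator on `N` qubits. -/
def tens {N : ℕ} (M : Fin N → Matrix (Fin 2) (Fin 2) ℂ) :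
    Matrix (Fin N → Fin 2) (Fin N → Fin 2) ℂ :=
  Matrix.of fun a b => ∏ j, M j (a j) (b j)

/-- `X^x = ⊗_j X^{x_j}`. -/
def Xpow {N : ℕ} (x : Fin N → Fin 2) : Matrix (Fin N → Fin 2) (Fin N → Fin 2) ℂ :=
  tens fun j => Xm ^ (x j).val

/-- `Z^z = ⊗_j Z^{z_j}`. -/
def Zpow {N : ℕ} (z : Fin N → Fin 2) : Matrix (Fin N → Fin 2) (Fin N → Fin 2) ℂ :=
  tens fun j => Zm ^ (z j).val

/-- `H^{⊗N}`. -/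
def Hall (N : ℕ) : Matrix (Fin N → Fin 2) (Fin N → Fin 2) ℂ := tens fun _ => Hm

/-- Computational basis vector `|m⟩`. -/
def ketv {N : ℕ} (m : Fin N → Fin 2) : (Fin N → Fin 2) → ℂ := fun a => if a = m then 1 else 0

/-- `X_i ⊗ X_j` (Pauli X on qubits i and j, identity elsewhere). -/
def XXt {N : ℕ} (i j : Fin N) : Matrix (Fin N → Fin 2) (Fin N → Fin 2) ℂ :=
  tens fun k => if k = i ∨ k = j then Xm else 1

/-- `Z_i ⊗ Z_j`. -/
def ZZt {N : ℕ} (i j : Fin N) : Matrix (Fin N → Fin 2) (Fin N → Fin 2) ℂ :=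
  tens fun k => if k = i ∨ k = j then Zm else 1

/-- Ordered pairs i < j. -/
def pairs (N : ℕ) : Finset (Fin N × Fin N) := Finset.univ.filter fun q => q.1 < q.2

/-- The local Hamiltonian `𝓗`. -/
def ham {N : ℕ} (p s : Fin N × Fin N → ℝ) : Matrix (Fin N → Fin 2) (Fin N → Fin 2) ℂ :=
  ∑ q ∈ pairs N, ((p q : ℂ) / 2) •
    ((2:ℂ)⁻¹ • (1 + (s q : ℂ) • XXt q.1 q.2) + (2:ℂ)⁻¹ • (1 + (s q : ℂ) • ZZt q.1 q.2))

/-- The diagonal Hamiltonian `𝓗_Z`. -/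
def hamZ {N : ℕ} (p s : Fin N × Fin N → ℝ) : Matrix (Fin N → Fin 2) (Fin N → Fin 2) ℂ :=
  ∑ q ∈ pairs N, (p q : ℂ) • ((2:ℂ)⁻¹ • (1 + (s q : ℂ) • ZZt q.1 q.2))

/-- Acceptance weight `∑_{i<j} p_{ij} (1 - s_{ij} (-1)^{m_i+m_j})/2`. -/
def wgt {N : ℕ} (p s : Fin N × Fin N → ℝ) (m : Fin N → Fin 2) : ℂ :=
  ∑ q ∈ pairs N, (p q : ℂ) * (1 - (s q : ℂ) * (-1 : ℂ) ^ ((m q.1).val + (m q.2).val)) / 2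

/-- `m'_i = m_i ⊕ (h z_i + (1-h) x_i)` (XOR in `Fin 2`). -/
def mprime {N : ℕ} (h : Fin 2) (m x z : Fin N → Fin 2) : Fin N → Fin 2 :=
  fun i => m i + (if h = 0 then x i else z i)

/-- Bell state `|φ_{α,β}⟩ = (Z^β ⊗ X^α)(|00⟩+|11⟩)/√2` as a vector on `Fin 2 × Fin 2`. -/
def bell (α β : Fin 2) : Fin 2 × Fin 2 → ℂ :=
  Matrix.mulVec ((Zm ^ β.val) ⊗ₖ (Xm ^ α.val))
    (fun q => if q.1 = q.2 then (Real.sqrt 2 : ℂ)⁻¹ else 0)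

/-! ### auxiliary definitions -/

/-- `W = ∑ p_q (1 - s_q Z_i Z_j)/2`, the diagonal matrix with entries `wgt`. -/
def Wm {N : ℕ} (p s : Fin N × Fin N → ℝ) : Matrix (Fin N → Fin 2) (Fin N → Fin 2) ℂ :=
  ∑ q ∈ pairs N, (p q : ℂ) • ((2:ℂ)⁻¹ • ((1 : Matrix (Fin N → Fin 2) (Fin N → Fin 2) ℂ) - (s q : ℂ) • ZZt q.1 q.2))
/-- `V = ∑ p_q (1 - s_q X_i X_j)/2`. -/
def Vm {N : ℕ} (p s : Fin N × Fin N → ℝ) : Matrix (Fin N → Fin 2) (Fin N → Fin 2) ℂ :=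
  ∑ q ∈ pairs N, (p q : ℂ) • ((2:ℂ)⁻¹ • ((1 : Matrix (Fin N → Fin 2) (Fin N → Fin 2) ℂ) - (s q : ℂ) • XXt q.1 q.2))
def zeta {N : ℕ} (z a : Fin N → Fin 2) : ℂ := ∏ j, (-1:ℂ) ^ ((z j).val * (a j).val)

/-! ### tens lemmas -/

lemma tens_apply {N : ℕ} (M : Fin N → Matrix (Fin 2) (Fin 2) ℂ) (a b : Fin N → Fin 2) :
    tens M a b = ∏ j, M j (a j) (b j) := rfl

lemma tens_congr {N : ℕ} {M M' : Fin N → Matrix (Fin 2) (Fin 2) ℂ} (h : ∀ j, M j = M' j) :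
    tens M = tens M' := by rw [show M = M' from funext h]

lemma tens_mul {N : ℕ} (M M' : Fin N → Matrix (Fin 2) (Fin 2) ℂ) :
    tens M * tens M' = tens fun j => M j * M' j := by
  ext a b
  simp only [Matrix.mul_apply, tens_apply,
    Fintype.prod_sum (f := fun j v => M j (a j) v * M' j v (b j))]
  rw [← Finset.sum_congr rfl fun c _ => Finset.prod_mul_distrib]

lemma tens_one {N : ℕ} : tens (fun _ : Fin N => (1 : Matrix (Fin 2) (Fin 2) ℂ)) = 1 := by
  ext a b
  simp only [tens_apply, Matrix.one_apply]
  by_cases h : a = b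
  · subst h; simp
  · rw [if_neg h]
    obtain ⟨j, hj⟩ := Function.ne_iff.mp h
    exact Finset.prod_eq_zero (Finset.mem_univ j) (if_neg hj)

lemma tens_diagonal {N : ℕ} (d : Fin N → Fin 2 → ℂ) :
    tens (fun j => Matrix.diagonal (d j)) = Matrix.diagonal (fun a => ∏ j, d j (a j)) := by
  ext a b
  simp only [tens_apply, Matrix.diagonal_apply]
  by_cases h : a = b
  · subst h; simp
  · rw [if_neg h]
    obtain ⟨j, hj⟩ := Function.ne_iff.mp h
    exact Finset.prod_eq_zero (Finset.mem_univ j) (if_neg hj)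

/-! ### 2×2 lemmas -/

lemma sq2 : (Real.sqrt 2 : ℂ)⁻¹ ^ 2 = (2:ℂ)⁻¹ := by
  rw [← Complex.ofReal_inv, ← Complex.ofReal_pow]
  norm_num [Real.sq_sqrt]

lemma Xm_mul_Xm : Xm * Xm = 1 := by
  ext a b; fin_cases a <;> fin_cases b <;> simp [Xm, Matrix.mul_apply, Fin.sum_univ_two, Matrix.one_apply]

lemma Hm_mul_Hm : Hm * Hm = 1 := by
  ext a b
  fin_cases a <;> fin_cases b <;>
    simp [Hm, Matrix.mul_apply, Fin.sum_univ_two, Matrix.one_apply, Matrix.smul_apply] <;>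
    ring_nf <;> rw [sq2] <;> ring

lemma Hm_Zm_Hm : Hm * Zm * Hm = Xm := by
  ext a b
  fin_cases a <;> fin_cases b <;>
    simp [Hm, Zm, Xm, Matrix.mul_apply, Fin.sum_univ_two, Matrix.one_apply, Matrix.smul_apply] <;>
    ring_nf <;> rw [sq2] <;> ring

lemma Hm_Xm_Hm : Hm * Xm * Hm = Zm := by
  ext a b
  fin_cases a <;> fin_cases b <;>
    simp [Hm, Zm, Xm, Matrix.mul_apply, Fin.sum_univ_two, Matrix.one_apply, Matrix.smul_apply] <;>
    ring_nf <;> rw [sq2] <;> ring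

lemma Zm_diag : Zm = Matrix.diagonal (fun v : Fin 2 => (-1:ℂ) ^ v.val) := by
  ext a b; fin_cases a <;> fin_cases b <;> simp [Zm, Matrix.diagonal_apply]

lemma Zm_pow_diag (v : Fin 2) :
    Zm ^ v.val = Matrix.diagonal (fun w : Fin 2 => (-1:ℂ) ^ (v.val * w.val)) := by
  fin_cases v
  · simpa using (Matrix.diagonal_one).symm
  · simpa using Zm_diag

lemma Xm_pow_apply (v : Fin 2) (a b : Fin 2) :
    (Xm ^ v.val) a b = if a = b + v then 1 else 0 := by
  fin_cases v <;> fin_cases a <;> fin_cases b <;> simp [Xm, Matrix.one_apply]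

lemma Xm_pow_sq (v : Fin 2) : Xm ^ v.val * Xm ^ v.val = 1 := by
  fin_cases v <;> simp [Xm_mul_Xm]

lemma Hm_Xm_pow_Hm (v : Fin 2) : Hm * Xm ^ v.val * Hm = Zm ^ v.val := by
  fin_cases v <;> simp [Hm_mul_Hm, Hm_Xm_Hm]

/-! ### Xpow / Zpow structure -/

lemma add_self_fn {N : ℕ} (x : Fin N → Fin 2) : x + x = 0 := by
  funext j
  have : ∀ w : Fin 2, w + w = 0 := by decide
  exact this (x j)

lemma add_add_cancel_fn {N : ℕ} (a x : Fin N → Fin 2) : a + x + x = a := by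
  rw [add_assoc, add_self_fn, add_zero]

lemma Xpow_apply {N : ℕ} (x : Fin N → Fin 2) (a b : Fin N → Fin 2) :
    Xpow x a b = if a = b + x then 1 else 0 := by
  rw [Xpow, tens_apply]
  simp only [Xm_pow_apply]
  rw [Finset.prod_boole]
  congr 1
  simp only [eq_iff_iff]
  constructor
  · intro h; funext j; exact h j (Finset.mem_univ j)
  · intro h j _; rw [h]; rfl

lemma Xpow_mul_apply {N : ℕ} (x : Fin N → Fin 2) (M : Matrix (Fin N → Fin 2) (Fin N → Fin 2) ℂ)
    (a b : Fin N → Fin 2) : (Xpow x * M) a b = M (a + x) b := by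
  rw [Matrix.mul_apply]
  have : ∀ c, Xpow x a c = if c = a + x then 1 else 0 := by
    intro c; rw [Xpow_apply]
    congr 1
    simp only [eq_iff_iff]
    constructor
    · intro h; rw [h, add_add_cancel_fn]
    · intro h; rw [h, add_add_cancel_fn]
  simp only [this, ite_mul, one_mul, zero_mul]
  simp

lemma mul_Xpow_apply {N : ℕ} (x : Fin N → Fin 2) (M : Matrix (Fin N → Fin 2) (Fin N → Fin 2) ℂ)
    (a b : Fin N → Fin 2) : (M * Xpow x) a b = M a (b + x) := by
  rw [Matrix.mul_apply]
  simp only [Xpow_apply, mul_ite, mul_one, mul_zero]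
  simp

lemma Xpow_conj_diag {N : ℕ} (x : Fin N → Fin 2) (d : (Fin N → Fin 2) → ℂ) :
    Xpow x * Matrix.diagonal d * Xpow x = Matrix.diagonal (fun a => d (a + x)) := by
  ext a b
  rw [mul_Xpow_apply, Xpow_mul_apply, Matrix.diagonal_apply, Matrix.diagonal_apply]
  by_cases h : a = b
  · subst h; simp
  · rw [if_neg h, if_neg (fun hc => h (by simpa using congrArg (· + x) hc))]

lemma Xpow_mul_Xpow {N : ℕ} (x : Fin N → Fin 2) : Xpow x * Xpow x = 1 := by
  rw [Xpow, tens_mul, ← tens_one]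
  exact tens_congr fun j => Xm_pow_sq (x j)

lemma Zpow_diag {N : ℕ} (z : Fin N → Fin 2) : Zpow z = Matrix.diagonal (zeta z) := by
  rw [Zpow, tens_congr fun j => Zm_pow_diag (z j), tens_diagonal]; rfl

lemma zeta_sq {N : ℕ} (z a : Fin N → Fin 2) : zeta z a * zeta z a = 1 := by
  rw [zeta, ← Finset.prod_mul_distrib]
  apply Finset.prod_eq_one
  intro j _
  rw [← pow_add, ← two_mul, pow_mul]
  norm_num

lemma Zpow_conj_diag {N : ℕ} (z : Fin N → Fin 2) (d : (Fin N → Fin 2) → ℂ) :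
    Zpow z * Matrix.diagonal d * Zpow z = Matrix.diagonal d := by
  rw [Zpow_diag, Matrix.diagonal_mul_diagonal, Matrix.diagonal_mul_diagonal]
  ext a b
  rcases eq_or_ne a b with rfl | h
  · simp only [Matrix.diagonal_apply_eq]
    have := zeta_sq z a
    ring_nf
    ring_nf at this
    rw [this, one_mul]
  · rw [Matrix.diagonal_apply_ne _ h, Matrix.diagonal_apply_ne _ h]

lemma Zpow_mul_Zpow {N : ℕ} (z : Fin N → Fin 2) : Zpow z * Zpow z = 1 := by
  rw [Zpow_diag, Matrix.diagonal_mul_diagonal, ← Matrix.diagonal_one]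
  exact congrArg _ (funext fun a => zeta_sq z a)

/-! ### ZZt, Wm diagonal -/

lemma pairs_ne {N : ℕ} {q : Fin N × Fin N} (hq : q ∈ pairs N) : q.1 ≠ q.2 :=
  ne_of_lt (Finset.mem_filter.mp hq).2

lemma ZZt_diag {N : ℕ} {i j : Fin N} (hij : i ≠ j) :
    ZZt i j = Matrix.diagonal (fun m => (-1:ℂ) ^ ((m i).val + (m j).val)) := by
  have hK : ∀ k, (if k = i ∨ k = j then Zm else 1)
      = Matrix.diagonal (fun v : Fin 2 => if k = i ∨ k = j then (-1:ℂ) ^ v.val else 1) := by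
    intro k
    by_cases h : k = i ∨ k = j
    · rw [if_pos h, Zm_diag]
      exact congrArg _ (funext fun v => (if_pos h).symm)
    · rw [if_neg h, ← Matrix.diagonal_one]
      exact congrArg _ (funext fun v => (if_neg h).symm)
  rw [ZZt, tens_congr hK, tens_diagonal]
  refine congrArg Matrix.diagonal (funext fun a => ?_)
  rw [← Finset.prod_subset (Finset.subset_univ ({i, j} : Finset (Fin N)))
    (fun k _ hk => by
      rw [if_neg]
      simpa [not_or] using hk)]
  rw [Finset.prod_pair hij, if_pos (Or.inl rfl), if_pos (Or.inr rfl), pow_add]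

lemma Wm_diag {N : ℕ} (p s : Fin N × Fin N → ℝ) :
    Wm p s = Matrix.diagonal (wgt p s) := by
  ext a b
  rcases eq_or_ne a b with rfl | h
  · simp only [Wm, Matrix.sum_apply, Matrix.diagonal_apply_eq, wgt]
    refine Finset.sum_congr rfl fun q hq => ?_
    rw [Matrix.smul_apply, Matrix.smul_apply, Matrix.sub_apply, Matrix.smul_apply,
      ZZt_diag (pairs_ne hq), Matrix.diagonal_apply_eq, Matrix.one_apply_eq]
    simp only [smul_eq_mul]
    ring
  · simp only [Wm, Matrix.sum_apply, Matrix.diagonal_apply_ne _ h]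
    refine Finset.sum_eq_zero fun q hq => ?_
    rw [Matrix.smul_apply, Matrix.smul_apply, Matrix.sub_apply, Matrix.smul_apply,
      ZZt_diag (pairs_ne hq), Matrix.diagonal_apply_ne _ h, Matrix.one_apply_ne h]
    simp

/-! ### Hall conjugation -/

lemma Hall_mul_Hall {N : ℕ} : Hall N * Hall N = 1 := by
  rw [Hall, tens_mul, ← tens_one]
  exact tens_congr fun _ => Hm_mul_Hm

lemma Hall_conj {N : ℕ} (K : Fin N → Matrix (Fin 2) (Fin 2) ℂ) :
    Hall N * tens K * Hall N = tens fun j => Hm * K j * Hm := by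
  rw [Hall, tens_mul, tens_mul]

lemma Hall_ZZt {N : ℕ} (i j : Fin N) : Hall N * ZZt i j * Hall N = XXt i j := by
  rw [ZZt, Hall_conj, XXt]
  exact tens_congr fun k => by
    split
    · exact Hm_Zm_Hm
    · rw [mul_one, Hm_mul_Hm]

lemma Hall_Xpow {N : ℕ} (x : Fin N → Fin 2) : Hall N * Xpow x * Hall N = Zpow x := by
  rw [Xpow, Hall_conj, Zpow]
  exact tens_congr fun j => Hm_Xm_pow_Hm (x j)

lemma Hall_Wm {N : ℕ} (p s : Fin N × Fin N → ℝ) :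
    Hall N * Wm p s * Hall N = Vm p s := by
  rw [Wm, Vm, Matrix.mul_sum, Matrix.sum_mul]
  refine Finset.sum_congr rfl fun q _ => ?_
  rw [Matrix.mul_smul, Matrix.smul_mul, Matrix.mul_smul, Matrix.smul_mul,
    Matrix.mul_sub, Matrix.sub_mul, mul_one, Matrix.mul_smul, Matrix.smul_mul,
    Hall_mul_Hall, Hall_ZZt]

/-! ### commutation -/

lemma Xpow_comm_XXt {N : ℕ} (x : Fin N → Fin 2) (i j : Fin N) :
    Xpow x * XXt i j = XXt i j * Xpow x := by
  rw [Xpow, XXt, tens_mul, tens_mul]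
  refine tens_congr fun k => ?_
  split
  · exact ((Commute.refl Xm).pow_left _).eq
  · rw [mul_one, one_mul]

lemma Xpow_Vm {N : ℕ} (x : Fin N → Fin 2) (p s : Fin N × Fin N → ℝ) :
    Xpow x * Vm p s * Xpow x = Vm p s := by
  rw [Vm, Matrix.mul_sum, Matrix.sum_mul]
  refine Finset.sum_congr rfl fun q _ => ?_
  rw [Matrix.mul_smul, Matrix.smul_mul, Matrix.mul_smul, Matrix.smul_mul,
    Matrix.mul_sub, Matrix.sub_mul, mul_one, Matrix.mul_smul, Matrix.smul_mul,
    Xpow_mul_Xpow, Xpow_comm_XXt, mul_assoc, Xpow_mul_Xpow, mul_one]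

/-! ### the key algebraic identity -/

lemma key1 {N : ℕ} (p s : Fin N × Fin N → ℝ) (hpsum : ∑ q ∈ pairs N, p q = 1) :
    (2:ℂ)⁻¹ • (Wm p s + Vm p s) = 1 - ham p s := by
  rw [eq_sub_iff_add_eq]
  have h2 : (2:ℂ)⁻¹ • (Wm p s + Vm p s) + ham p s
      = ∑ q ∈ pairs N, (p q : ℂ) • (1 : Matrix (Fin N → Fin 2) (Fin N → Fin 2) ℂ) := by
    rw [Wm, Vm, ham, ← Finset.sum_add_distrib, Finset.smul_sum, ← Finset.sum_add_distrib]
    refine Finset.sum_congr rfl fun q _ => ?_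
    ext a b
    simp only [Matrix.smul_apply, Matrix.add_apply, Matrix.sub_apply, Matrix.one_apply,
      smul_eq_mul]
    ring
  rw [h2, ← Finset.sum_smul,
    show (∑ q ∈ pairs N, (p q : ℂ)) = 1 from by
      rw [← Complex.ofReal_sum, hpsum, Complex.ofReal_one],
    one_smul]

/-! ### trace lemmas -/

lemma trace_mul_diag {N : ℕ} (A : Matrix (Fin N → Fin 2) (Fin N → Fin 2) ℂ)
    (d : (Fin N → Fin 2) → ℂ) :
    (A * Matrix.diagonal d).trace = ∑ m, A m m * d m := by
  simp [Matrix.trace, Matrix.diag, Matrix.mul_diagonal]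

/-! ### trace rotations -/

variable {N : ℕ}

lemma traceB (p s : Fin N × Fin N → ℝ) (x z : Fin N → Fin 2)
    (P : Matrix (Fin N → Fin 2) (Fin N → Fin 2) ℂ) :
    (P * (Xpow x * Wm p s * Xpow x)).trace
      = ((Xpow x * Zpow z * P * Zpow z * Xpow x) * Wm p s).trace := by
  have h1 : Zpow z * (Xpow x * Wm p s * Xpow x) * Zpow z = Xpow x * Wm p s * Xpow x := by
    rw [Wm_diag, Xpow_conj_diag, Zpow_conj_diag]
  rw [show Xpow x * Zpow z * P * Zpow z * Xpow x * Wm p s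
      = Xpow x * (Zpow z * P * Zpow z * Xpow x * Wm p s) from by simp only [mul_assoc]]
  rw [Matrix.trace_mul_comm (Xpow x) (Zpow z * P * Zpow z * Xpow x * Wm p s)]
  rw [show Zpow z * P * Zpow z * Xpow x * Wm p s * Xpow x
      = Zpow z * (P * Zpow z * Xpow x * Wm p s * Xpow x) from by simp only [mul_assoc]]
  rw [Matrix.trace_mul_comm (Zpow z) (P * Zpow z * Xpow x * Wm p s * Xpow x)]
  rw [show P * Zpow z * Xpow x * Wm p s * Xpow x * Zpow z
      = P * (Zpow z * (Xpow x * Wm p s * Xpow x) * Zpow z) from by simp only [mul_assoc]]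
  rw [h1]

lemma HH_left (t : Matrix (Fin N → Fin 2) (Fin N → Fin 2) ℂ) :
    Hall N * (Hall N * t) = t := by
  rw [← mul_assoc, Hall_mul_Hall, one_mul]

lemma Hall_conj_triple (A B C : Matrix (Fin N → Fin 2) (Fin N → Fin 2) ℂ) :
    Hall N * (A * B * C) * Hall N
      = (Hall N * A * Hall N) * (Hall N * B * Hall N) * (Hall N * C * Hall N) := by
  simp only [mul_assoc, HH_left]

lemma traceC (p s : Fin N × Fin N → ℝ) (x z : Fin N → Fin 2)
    (P : Matrix (Fin N → Fin 2) (Fin N → Fin 2) ℂ) :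
    ((Hall N * P * Hall N) * (Xpow z * Wm p s * Xpow z)).trace
      = ((Xpow x * Zpow z * P * Zpow z * Xpow x) * Vm p s).trace := by
  have hQ : Hall N * (Xpow z * Wm p s * Xpow z) * Hall N = Zpow z * Vm p s * Zpow z := by
    rw [Hall_conj_triple, Hall_Xpow, Hall_Wm]
  -- LHS → trace (P * (Zpow z * Vm * Zpow z))
  rw [show Hall N * P * Hall N * (Xpow z * Wm p s * Xpow z)
      = Hall N * (P * Hall N * (Xpow z * Wm p s * Xpow z)) from by simp only [mul_assoc]]
  rw [Matrix.trace_mul_comm (Hall N) (P * Hall N * (Xpow z * Wm p s * Xpow z))]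
  rw [show P * Hall N * (Xpow z * Wm p s * Xpow z) * Hall N
      = P * (Hall N * (Xpow z * Wm p s * Xpow z) * Hall N) from by simp only [mul_assoc]]
  rw [hQ]
  -- RHS → trace (P * (Zpow z * Vm * Zpow z))
  rw [show Xpow x * Zpow z * P * Zpow z * Xpow x * Vm p s
      = Xpow x * (Zpow z * P * Zpow z * Xpow x * Vm p s) from by simp only [mul_assoc]]
  rw [Matrix.trace_mul_comm (Xpow x) (Zpow z * P * Zpow z * Xpow x * Vm p s)]
  rw [show Zpow z * P * Zpow z * Xpow x * Vm p s * Xpow x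
      = Zpow z * (P * Zpow z * Xpow x * Vm p s * Xpow x) from by simp only [mul_assoc]]
  rw [Matrix.trace_mul_comm (Zpow z) (P * Zpow z * Xpow x * Vm p s * Xpow x)]
  rw [show P * Zpow z * Xpow x * Vm p s * Xpow x * Zpow z
      = P * (Zpow z * (Xpow x * Vm p s * Xpow x) * Zpow z) from by simp only [mul_assoc]]
  rw [Xpow_Vm]

lemma trace_sigma (x z : Fin N → Fin 2) (P : Matrix (Fin N → Fin 2) (Fin N → Fin 2) ℂ) :
    (Xpow x * Zpow z * P * Zpow z * Xpow x).trace = P.trace := by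
  rw [show Xpow x * Zpow z * P * Zpow z * Xpow x
      = Xpow x * (Zpow z * P * Zpow z * Xpow x) from by simp only [mul_assoc]]
  rw [Matrix.trace_mul_comm (Xpow x) (Zpow z * P * Zpow z * Xpow x)]
  rw [show Zpow z * P * Zpow z * Xpow x * Xpow x
      = Zpow z * (P * Zpow z * (Xpow x * Xpow x)) from by simp only [mul_assoc]]
  rw [Xpow_mul_Xpow, mul_one, Matrix.trace_mul_comm (Zpow z) (P * Zpow z), mul_assoc,
    Zpow_mul_Zpow, mul_one]

lemma sum_diag_wgt (p s : Fin N × Fin N → ℝ) (A : Matrix (Fin N → Fin 2) (Fin N → Fin 2) ℂ)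
    (e : Fin N → Fin 2) :
    ∑ m, A m m * wgt p s (m + e) = (A * (Xpow e * Wm p s * Xpow e)).trace := by
  rw [Wm_diag, Xpow_conj_diag, trace_mul_diag]

/-! ### hermiticity -/

lemma Xpow_herm (x : Fin N → Fin 2) : (Xpow x)ᴴ = Xpow x := by
  ext a b
  rw [Matrix.conjTranspose_apply, Xpow_apply, Xpow_apply]
  have : (b = a + x) ↔ (a = b + x) := by
    constructor
    · intro h; rw [h, add_add_cancel_fn]
    · intro h; rw [h, add_add_cancel_fn]
  rw [if_congr this rfl rfl]
  split <;> simp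

lemma Zpow_herm (z : Fin N → Fin 2) : (Zpow z)ᴴ = Zpow z := by
  rw [Zpow_diag, Matrix.diagonal_conjTranspose]
  refine congrArg Matrix.diagonal (funext fun a => ?_)
  rw [Pi.star_apply, zeta, star_prod]
  exact Finset.prod_congr rfl fun j _ => by
    rw [star_pow]
    norm_num

/-! ### positivity -/

lemma sigma_psd (x z : Fin N → Fin 2) {P : Matrix (Fin N → Fin 2) (Fin N → Fin 2) ℂ}
    (hP : P.PosSemidef) : (Xpow x * Zpow z * P * Zpow z * Xpow x).PosSemidef := by
  have h : Xpow x * Zpow z * P * Zpow z * Xpow x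
      = (Xpow x * Zpow z) * P * (Xpow x * Zpow z)ᴴ := by
    rw [Matrix.conjTranspose_mul, Xpow_herm, Zpow_herm]
    simp only [mul_assoc]
  rw [h]
  exact hP.mul_mul_conjTranspose_same _

lemma colbound {p s : Fin N × Fin N → ℝ} {β : ℝ}
    (hg : ∀ ψ : (Fin N → Fin 2) → ℂ, star ψ ⬝ᵥ ψ = 1 →
      β ≤ (star ψ ⬝ᵥ ((ham p s).mulVec ψ)).re)
    (c : (Fin N → Fin 2) → ℂ) :
    β * (star c ⬝ᵥ c).re ≤ (star c ⬝ᵥ ((ham p s).mulVec c)).re := by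
  have hcc : star c ⬝ᵥ c = ((∑ a, Complex.normSq (c a) : ℝ) : ℂ) := by
    push_cast
    refine Finset.sum_congr rfl fun a _ => ?_
    rw [Pi.star_apply, Complex.star_def, Complex.normSq_eq_conj_mul_self]
  set t : ℝ := ∑ a, Complex.normSq (c a) with ht
  have ht0 : 0 ≤ t := Finset.sum_nonneg fun a _ => Complex.normSq_nonneg _
  rcases eq_or_lt_of_le ht0 with h0 | hpos'
  · have hc0 : c = 0 := by
      funext a
      have := (Finset.sum_eq_zero_iff_of_nonneg
        (fun a _ => Complex.normSq_nonneg (c a))).mp h0.symm a (Finset.mem_univ a)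
      simpa using Complex.normSq_eq_zero.mp this
    rw [hc0]
    simp
  · set r : ℝ := Real.sqrt t with hr
    have hrpos : 0 < r := Real.sqrt_pos.mpr hpos'
    have hrr : r * r = t := Real.mul_self_sqrt ht0
    have hrne : (r : ℂ) ≠ 0 := by
      simpa using (Complex.ofReal_ne_zero.mpr (ne_of_gt hrpos))
    set ψ : (Fin N → Fin 2) → ℂ := ((r : ℂ))⁻¹ • c with hψdef
    have hstarψ : star ψ = ((r : ℂ))⁻¹ • star c := by
      rw [hψdef, star_smul]
      congr 1
      rw [star_inv₀, Complex.star_def, Complex.conj_ofReal]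
    have hnorm : star ψ ⬝ᵥ ψ = 1 := by
      rw [hψdef, hstarψ, smul_dotProduct, dotProduct_smul, hcc, smul_eq_mul, smul_eq_mul]
      rw [← mul_assoc, ← mul_inv]
      norm_cast
      rw [hrr]
      field_simp
    have hq := hg ψ hnorm
    have hmv : (ham p s).mulVec ψ = ((r : ℂ))⁻¹ • (ham p s).mulVec c := by
      rw [hψdef, Matrix.mulVec_smul]
    have hval : star ψ ⬝ᵥ ((ham p s).mulVec ψ)
        = (((t⁻¹ : ℝ)) : ℂ) * (star c ⬝ᵥ ((ham p s).mulVec c)) := by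
      rw [hstarψ, hmv, smul_dotProduct, dotProduct_smul, smul_eq_mul, smul_eq_mul,
        ← mul_assoc, ← mul_inv]
      norm_cast
      rw [hrr]
    rw [hval, Complex.re_ofReal_mul] at hq
    have := mul_le_mul_of_nonneg_left hq (le_of_lt hpos')
    rw [← mul_assoc, mul_inv_cancel₀ (ne_of_gt hpos'), one_mul] at this
    rw [hcc, Complex.ofReal_re]
    calc β * t = t * β := mul_comm _ _
    _ ≤ _ := this

lemma quad {p s : Fin N × Fin N → ℝ} {β : ℝ}
    (hg : ∀ ψ : (Fin N → Fin 2) → ℂ, star ψ ⬝ᵥ ψ = 1 →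
      β ≤ (star ψ ⬝ᵥ ((ham p s).mulVec ψ)).re)
    (M : Matrix (Fin N → Fin 2) (Fin N → Fin 2) ℂ) (hM : M.PosSemidef) :
    β * M.trace.re ≤ ((ham p s * M).trace).re := by
  obtain ⟨B, hBB, hBH⟩ : ∃ B : Matrix (Fin N → Fin 2) (Fin N → Fin 2) ℂ, B * B = M ∧ Bᴴ = B := by
    open scoped MatrixOrder in
    exact ⟨CFC.sqrt M, CFC.sqrt_mul_sqrt_self M hM.nonneg,
      (Matrix.nonneg_iff_posSemidef.mp (CFC.sqrt_nonneg M)).1⟩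
  have hstar : ∀ a j, star (B a j) = B j a := by
    intro a j
    rw [← Matrix.conjTranspose_apply, hBH]
  have tr1 : (ham p s * M).trace
      = ∑ j, star (fun a => B a j) ⬝ᵥ (ham p s).mulVec (fun a => B a j) := by
    rw [← hBB, ← mul_assoc, Matrix.trace_mul_comm (ham p s * B) B]
    simp only [Matrix.trace, Matrix.diag_apply, Matrix.mul_apply, dotProduct,
      Matrix.mulVec, Pi.star_apply, hstar]
  have tr2 : M.trace = ∑ j, star (fun a => B a j) ⬝ᵥ (fun a => B a j) := by
    rw [← hBB]
    simp only [Matrix.trace, Matrix.diag_apply, Matrix.mul_apply, dotProduct,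
      Pi.star_apply, hstar]
  rw [tr1, tr2, Complex.re_sum, Complex.re_sum, Finset.mul_sum]
  exact Finset.sum_le_sum fun j _ => colbound hg _

/-- Soundness of the trusted-center protocol: the acceptance probability
equals `Tr[(I−𝓗)σ]` for the density operator `σ = (1/2^N)∑_{x,z} X^x Z^z Π_{x,z} Z^z X^x`;
consequently, if the ground energy of `𝓗` is at least `β`, the acceptance probability
is at most `1 − β`. -/
theorem statement7 (N : ℕ) (hN : 2 ≤ N) (p s : Fin N × Fin N → ℝ)
    (hp : ∀ q ∈ pairs N, 0 < p q) (hpsum : ∑ q ∈ pairs N, p q = 1)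
    (hs : ∀ q ∈ pairs N, s q = 1 ∨ s q = -1)
    (Pv : (Fin N → Fin 2) × (Fin N → Fin 2) → Matrix (Fin N → Fin 2) (Fin N → Fin 2) ℂ)
    (hpos : ∀ xz, (Pv xz).PosSemidef)
    (hsum : ∑ xz : (Fin N → Fin 2) × (Fin N → Fin 2), Pv xz = 1)
    (β : ℝ) :
    ((2:ℂ)⁻¹ * ∑ h : Fin 2, ((2:ℂ)^N)⁻¹ * ∑ m : Fin N → Fin 2,
        ∑ xz : (Fin N → Fin 2) × (Fin N → Fin 2),
          ((Hall N ^ h.val * Pv xz * Hall N ^ h.val) m m) * wgt p s (mprime h m xz.1 xz.2))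
      = (((1 : Matrix (Fin N → Fin 2) (Fin N → Fin 2) ℂ) - ham p s) *
          (((2:ℂ)^N)⁻¹ • ∑ xz : (Fin N → Fin 2) × (Fin N → Fin 2),
            Xpow xz.1 * Zpow xz.2 * Pv xz * Zpow xz.2 * Xpow xz.1)).trace ∧
    ((∀ ψ : (Fin N → Fin 2) → ℂ, star ψ ⬝ᵥ ψ = 1 →
        β ≤ (star ψ ⬝ᵥ ((ham p s).mulVec ψ)).re) →
      ((2:ℂ)⁻¹ * ∑ h : Fin 2, ((2:ℂ)^N)⁻¹ * ∑ m : Fin N → Fin 2,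
        ∑ xz : (Fin N → Fin 2) × (Fin N → Fin 2),
          ((Hall N ^ h.val * Pv xz * Hall N ^ h.val) m m) * wgt p s (mprime h m xz.1 xz.2)).re
        ≤ 1 - β) := by
  set S : Matrix (Fin N → Fin 2) (Fin N → Fin 2) ℂ :=
    ∑ xz : (Fin N → Fin 2) × (Fin N → Fin 2),
      Xpow xz.1 * Zpow xz.2 * Pv xz * Zpow xz.2 * Xpow xz.1 with hSdef
  have hm0 : ∀ (m x z : Fin N → Fin 2), mprime 0 m x z = m + x := by
    intro m x z; funext i; simp [mprime]
  have hm1 : ∀ (m x z : Fin N → Fin 2), mprime 1 m x z = m + z := by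
    intro m x z; funext i; simp [mprime]
  have E0 : (∑ m : Fin N → Fin 2, ∑ xz : (Fin N → Fin 2) × (Fin N → Fin 2),
        (Pv xz) m m * wgt p s (mprime 0 m xz.1 xz.2))
      = ∑ xz : (Fin N → Fin 2) × (Fin N → Fin 2),
          ((Xpow xz.1 * Zpow xz.2 * Pv xz * Zpow xz.2 * Xpow xz.1) * Wm p s).trace := by
    rw [Finset.sum_comm]
    refine Finset.sum_congr rfl fun xz _ => ?_
    simp only [hm0]
    rw [sum_diag_wgt p s (Pv xz) xz.1, traceB p s xz.1 xz.2 (Pv xz)]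
  have E1 : (∑ m : Fin N → Fin 2, ∑ xz : (Fin N → Fin 2) × (Fin N → Fin 2),
        ((Hall N * Pv xz * Hall N) m m) * wgt p s (mprime 1 m xz.1 xz.2))
      = ∑ xz : (Fin N → Fin 2) × (Fin N → Fin 2),
          ((Xpow xz.1 * Zpow xz.2 * Pv xz * Zpow xz.2 * Xpow xz.1) * Vm p s).trace := by
    rw [Finset.sum_comm]
    refine Finset.sum_congr rfl fun xz _ => ?_
    simp only [hm1]
    rw [sum_diag_wgt p s (Hall N * Pv xz * Hall N) xz.2, traceC p s xz.1 xz.2 (Pv xz)]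
  have hpart1 : ((2:ℂ)⁻¹ * ∑ h : Fin 2, ((2:ℂ)^N)⁻¹ * ∑ m : Fin N → Fin 2,
        ∑ xz : (Fin N → Fin 2) × (Fin N → Fin 2),
          ((Hall N ^ h.val * Pv xz * Hall N ^ h.val) m m) * wgt p s (mprime h m xz.1 xz.2))
      = (((1 : Matrix (Fin N → Fin 2) (Fin N → Fin 2) ℂ) - ham p s) *
          (((2:ℂ)^N)⁻¹ • S)).trace := by
    rw [Fin.sum_univ_two]
    simp only [Fin.val_zero, Fin.val_one, pow_zero, pow_one, one_mul, mul_one]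
    rw [E0, E1]
    rw [Matrix.mul_smul, Matrix.trace_smul, smul_eq_mul, hSdef, Matrix.mul_sum,
      Matrix.trace_sum]
    rw [Finset.sum_congr rfl (fun xz _ => show
        ((1 - ham p s) * (Xpow xz.1 * Zpow xz.2 * Pv xz * Zpow xz.2 * Xpow xz.1)).trace
        = (2:ℂ)⁻¹ * (((Xpow xz.1 * Zpow xz.2 * Pv xz * Zpow xz.2 * Xpow xz.1) * Wm p s).trace
            + ((Xpow xz.1 * Zpow xz.2 * Pv xz * Zpow xz.2 * Xpow xz.1) * Vm p s).trace) from by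
      rw [Matrix.trace_mul_comm, ← key1 p s hpsum, Matrix.mul_smul, Matrix.trace_smul,
        mul_add, Matrix.trace_add, smul_eq_mul])]
    rw [show (∑ xz : (Fin N → Fin 2) × (Fin N → Fin 2), (2:ℂ)⁻¹ *
        (((Xpow xz.1 * Zpow xz.2 * Pv xz * Zpow xz.2 * Xpow xz.1) * Wm p s).trace
          + ((Xpow xz.1 * Zpow xz.2 * Pv xz * Zpow xz.2 * Xpow xz.1) * Vm p s).trace))
        = (2:ℂ)⁻¹ * ((∑ xz : (Fin N → Fin 2) × (Fin N → Fin 2),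
            ((Xpow xz.1 * Zpow xz.2 * Pv xz * Zpow xz.2 * Xpow xz.1) * Wm p s).trace)
          + ∑ xz : (Fin N → Fin 2) × (Fin N → Fin 2),
            ((Xpow xz.1 * Zpow xz.2 * Pv xz * Zpow xz.2 * Xpow xz.1) * Vm p s).trace) from by
      rw [← Finset.mul_sum, Finset.sum_add_distrib]]
    ring
  refine ⟨hpart1, fun hg => ?_⟩
  rw [hpart1]
  have hSpsd : S.PosSemidef := by
    rw [hSdef]
    exact Finset.sum_induction _ _ (fun a b ha hb => ha.add hb) Matrix.PosSemidef.zero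
      (fun xz _ => sigma_psd xz.1 xz.2 (hpos xz))
  have htrS : S.trace = ((((2:ℝ)^N) : ℝ) : ℂ) := by
    rw [hSdef, Matrix.trace_sum]
    rw [Finset.sum_congr rfl (fun xz _ => trace_sigma xz.1 xz.2 (Pv xz))]
    rw [← Matrix.trace_sum, hsum, Matrix.trace_one]
    push_cast
    norm_num [Fintype.card_fun]
  have hpow : ((2:ℂ)^N)⁻¹ = ((((2:ℝ)^N)⁻¹ : ℝ) : ℂ) := by push_cast; ring
  have h2N : (0:ℝ) < (2:ℝ)^N := by positivity
  have hquad := quad hg S hSpsd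
  rw [htrS] at hquad
  have hre : ((((2:ℝ)^N : ℝ) : ℂ)).re = (2:ℝ)^N := Complex.ofReal_re _
  rw [hre] at hquad
  -- compute the trace
  rw [Matrix.mul_smul, Matrix.trace_smul, smul_eq_mul, Matrix.sub_mul, one_mul,
    Matrix.trace_sub, htrS, hpow, Complex.re_ofReal_mul, Complex.sub_re, hre]
  have hT : β * (2:ℝ)^N ≤ ((ham p s * S).trace).re := hquad
  calc ((2:ℝ)^N)⁻¹ * ((2:ℝ)^N - ((ham p s * S).trace).re)
      ≤ ((2:ℝ)^N)⁻¹ * ((2:ℝ)^N - β * (2:ℝ)^N) := by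
        apply mul_le_mul_of_nonneg_left _ (by positivity)
        linarith
    _ = 1 - β := by field_simp

end
end

section
/- Computational soundness identity: for any (M+N)-qubit density operator ρ_{B₁,B₂} and any POVM {Π_{x,z}}_{x,z∈{0,1}^N} on B₁ (with M qubits; the protocol accepts via the same rule as the trusted-center protocol), the acceptance probability ∑_{h,m} P(h,m) ∑_{x,z} Tr(Π_{x,z} σ_{h,m}) ∑_{i<j} p_{i,j}(1 − s_{i,j}(−1)^{m_i'+m_j'})/2 equals 1 − Tr(𝓗 η), where η := Tr_{B₁}[ ∑_{x,z} (√Π_{x,z} ⊗ X^x Z^z) ρ_{B₁,B₂} (√Π_{x,z} ⊗ Z^z X^x) ], and η is a density operator on N qubits. -/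
open Matrix Finset Kronecker BigOperators ComplexOrder

noncomputable section

/-- `|φ_{h,m}⟩ = ⊗_j H^h |m_j⟩`. -/
def phiHM {N : ℕ} (h : Fin 2) (m : Fin N → Fin 2) : (Fin N → Fin 2) → ℂ :=
  (Hall N ^ h.val).mulVec (ketv m)

/-- `|φ_{h,m}⟩⟨φ_{h,m}|`. -/
def projHM {N : ℕ} (h : Fin 2) (m : Fin N → Fin 2) :
    Matrix (Fin N → Fin 2) (Fin N → Fin 2) ℂ :=
  Matrix.vecMulVec (phiHM h m) (star (phiHM h m))

/-- Partial trace over the second register. -/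
def trB2 {B1 B2 : Type*} [Fintype B2] (M : Matrix (B1 × B2) (B1 × B2) ℂ) :
    Matrix B1 B1 ℂ :=
  Matrix.of fun a c => ∑ b : B2, M (a, b) (c, b)

/-- Partial trace over the first register. -/
def trB1 {B1 B2 : Type*} [Fintype B1] (M : Matrix (B1 × B2) (B1 × B2) ℂ) :
    Matrix B2 B2 ℂ :=
  Matrix.of fun b d => ∑ a : B1, M (a, b) (a, d)

/-- `P(h,m) = (1/2)Tr[(I_{B₁} ⊗ |φ_{h,m}⟩⟨φ_{h,m}|) ρ]`. -/
def Pprob {M N : ℕ} (ρ : Matrix ((Fin M → Fin 2) × (Fin N → Fin 2))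
    ((Fin M → Fin 2) × (Fin N → Fin 2)) ℂ) (h : Fin 2) (m : Fin N → Fin 2) : ℂ :=
  (2:ℂ)⁻¹ * (((1 : Matrix (Fin M → Fin 2) (Fin M → Fin 2) ℂ) ⊗ₖ projHM h m) * ρ).trace

/-- `σ_{h,m} = Tr_{B₂}[(I⊗|φ⟩⟨φ|) ρ (I⊗|φ⟩⟨φ|)]/(2P(h,m))`. -/
def sigmaHM {M N : ℕ} (ρ : Matrix ((Fin M → Fin 2) × (Fin N → Fin 2))
    ((Fin M → Fin 2) × (Fin N → Fin 2)) ℂ) (h : Fin 2) (m : Fin N → Fin 2) :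
    Matrix (Fin M → Fin 2) (Fin M → Fin 2) ℂ :=
  (2 * Pprob ρ h m)⁻¹ •
    trB2 (((1 : Matrix (Fin M → Fin 2) (Fin M → Fin 2) ℂ) ⊗ₖ projHM h m) * ρ *
      ((1 : Matrix (Fin M → Fin 2) (Fin M → Fin 2) ℂ) ⊗ₖ projHM h m))

/-- The positive semidefinite square root, as `Matrix.PosSemidef.sqrt` was defined in older Mathlib. -/
def psdSqrt {n : Type*} [Fintype n] [DecidableEq n] {A : Matrix n n ℂ} (hA : A.PosSemidef) :
    Matrix n n ℂ :=
  hA.1.eigenvectorUnitary.1 * diagonal ((↑) ∘ Real.sqrt ∘ hA.1.eigenvalues) *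
    (star hA.1.eigenvectorUnitary : Matrix n n ℂ)

/-- `η = Tr_{B₁}[∑_{x,z}(√Π_{x,z} ⊗ X^x Z^z) ρ (√Π_{x,z} ⊗ Z^z X^x)]`. -/
def etaSt {M N : ℕ} (ρ : Matrix ((Fin M → Fin 2) × (Fin N → Fin 2))
    ((Fin M → Fin 2) × (Fin N → Fin 2)) ℂ)
    (Pv : (Fin N → Fin 2) × (Fin N → Fin 2) → Matrix (Fin M → Fin 2) (Fin M → Fin 2) ℂ)
    (hpos : ∀ xz, (Pv xz).PosSemidef) :
    Matrix (Fin N → Fin 2) (Fin N → Fin 2) ℂ :=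
  trB1 (∑ xz : (Fin N → Fin 2) × (Fin N → Fin 2),
    (psdSqrt (hpos xz) ⊗ₖ (Xpow xz.1 * Zpow xz.2)) * ρ *
    (psdSqrt (hpos xz) ⊗ₖ (Zpow xz.2 * Xpow xz.1)))

set_option linter.unusedSectionVars false
set_option linter.unreachableTactic false
set_option linter.unusedTactic false
lemma psdSqrt_mul_self {n : Type*} [Fintype n] [DecidableEq n] {A : Matrix n n ℂ}
    (hA : A.PosSemidef) : psdSqrt hA * psdSqrt hA = A := by
  have hU : (star hA.1.eigenvectorUnitary : Matrix n n ℂ) * hA.1.eigenvectorUnitary.1 = 1 :=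
    Unitary.coe_star_mul_self _
  have hD : diagonal ((↑) ∘ Real.sqrt ∘ hA.1.eigenvalues) *
      diagonal ((↑) ∘ Real.sqrt ∘ hA.1.eigenvalues)
      = diagonal (RCLike.ofReal ∘ hA.1.eigenvalues : n → ℂ) := by
    rw [diagonal_mul_diagonal]
    congr 1
    funext i
    simp only [Function.comp_apply]
    rw [← Complex.ofReal_mul, Real.mul_self_sqrt (hA.eigenvalues_nonneg i)]
    rfl
  unfold psdSqrt
  rw [show hA.1.eigenvectorUnitary.1 * diagonal ((↑) ∘ Real.sqrt ∘ hA.1.eigenvalues) *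
      (star hA.1.eigenvectorUnitary : Matrix n n ℂ) *
      (hA.1.eigenvectorUnitary.1 * diagonal ((↑) ∘ Real.sqrt ∘ hA.1.eigenvalues) *
      (star hA.1.eigenvectorUnitary : Matrix n n ℂ))
      = hA.1.eigenvectorUnitary.1 * (diagonal ((↑) ∘ Real.sqrt ∘ hA.1.eigenvalues) *
      ((star hA.1.eigenvectorUnitary : Matrix n n ℂ) * hA.1.eigenvectorUnitary.1) *
      diagonal ((↑) ∘ Real.sqrt ∘ hA.1.eigenvalues)) *
      (star hA.1.eigenvectorUnitary : Matrix n n ℂ) by simp only [Matrix.mul_assoc],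
    hU, Matrix.mul_one, hD]
  conv_rhs => rw [hA.1.spectral_theorem, Unitary.conjStarAlgAut_apply]

lemma psdSqrt_herm {n : Type*} [Fintype n] [DecidableEq n] {A : Matrix n n ℂ}
    (hA : A.PosSemidef) : (psdSqrt hA)ᴴ = psdSqrt hA := by
  unfold psdSqrt
  rw [conjTranspose_mul, conjTranspose_mul, diagonal_conjTranspose, ← star_eq_conjTranspose,
    star_star, Matrix.mul_assoc]
  congr 3
  funext i
  simp

namespace S13
variable {N : ℕ}

variable {N : ℕ}

lemma tens_mul (A B : Fin N → Matrix (Fin 2) (Fin 2) ℂ) :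
    tens A * tens B = tens (fun j => A j * B j) := by
  ext a c
  simp only [tens, Matrix.mul_apply, Matrix.of_apply]
  rw [show (∏ j, ∑ t, A j (a j) t * B j t (c j))
      = ∑ p ∈ Fintype.piFinset (fun _ : Fin N => (Finset.univ : Finset (Fin 2))),
          ∏ j, A j (a j) (p j) * B j (p j) (c j) from Finset.prod_univ_sum _ _]
  rw [Fintype.piFinset_univ]
  exact Finset.sum_congr rfl fun b _ => (Finset.prod_mul_distrib).symm

lemma tens_one : tens (fun _ : Fin N => (1 : Matrix (Fin 2) (Fin 2) ℂ)) = 1 := by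
  ext a c
  simp only [tens, Matrix.of_apply, Matrix.one_apply]
  simp only [Finset.prod_boole]
  simp [funext_iff]

lemma tens_smul (c : Fin N → ℂ) (A : Fin N → Matrix (Fin 2) (Fin 2) ℂ) :
    tens (fun j => c j • A j) = (∏ j, c j) • tens A := by
  ext a b
  simp [tens, Finset.prod_mul_distrib]

lemma tens_conjTranspose (A : Fin N → Matrix (Fin 2) (Fin 2) ℂ) :
    (tens A)ᴴ = tens (fun j => (A j)ᴴ) := by
  ext a b
  simp only [tens, conjTranspose_apply, Matrix.of_apply]
  exact star_prod _ _

lemma sqrt2_mul_self : (Real.sqrt 2 : ℂ) * (Real.sqrt 2 : ℂ) = 2 := by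
  rw [← Complex.ofReal_mul, Real.mul_self_sqrt (by norm_num)]
  norm_num

lemma sqrt2_sq : ((Real.sqrt 2 : ℂ))⁻¹ * (Real.sqrt 2 : ℂ)⁻¹ = 2⁻¹ := by
  rw [← mul_inv, sqrt2_mul_self]

lemma Xm_mul_Xm : Xm * Xm = 1 := by
  ext i j; fin_cases i <;> fin_cases j <;>
    simp [Xm, Matrix.mul_apply, Fin.sum_univ_two, Matrix.one_apply]

lemma Zm_mul_Zm : Zm * Zm = 1 := by
  ext i j; fin_cases i <;> fin_cases j <;>
    simp [Zm, Matrix.mul_apply, Fin.sum_univ_two, Matrix.one_apply]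

lemma Hm_mul_Hm : Hm * Hm = 1 := by
  rw [Hm, smul_mul_smul_comm, sqrt2_sq]
  ext i j; fin_cases i <;> fin_cases j <;>
    simp [Matrix.mul_apply, Fin.sum_univ_two, Matrix.one_apply] <;> norm_num

lemma Hm_Zm_Hm : Hm * Zm * Hm = Xm := by
  rw [Hm, smul_mul_assoc, smul_mul_assoc, mul_smul_comm, smul_smul, sqrt2_sq]
  ext i j; fin_cases i <;> fin_cases j <;>
    simp [Zm, Xm, Matrix.mul_apply, Fin.sum_univ_two] <;> norm_num

lemma Hm_herm : Hmᴴ = Hm := by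
  ext i j; fin_cases i <;> fin_cases j <;> simp [Hm]

lemma Xm_herm : Xmᴴ = Xm := by
  ext i j; fin_cases i <;> fin_cases j <;> simp [Xm]

lemma Zm_herm : Zmᴴ = Zm := by
  ext i j; fin_cases i <;> fin_cases j <;> simp [Zm]

-- single-qubit conjugations, grouped as (Zᵃ*Xᵇ) * M * (Xᵇ*Zᵃ)
lemma conjX (a b : Fin 2) :
    (Zm ^ a.val * Xm ^ b.val) * Xm * (Xm ^ b.val * Zm ^ a.val) = ((-1:ℂ) ^ a.val) • Xm := by
  fin_cases a <;> fin_cases b <;>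
    · ext i j; fin_cases i <;> fin_cases j <;>
      simp [Xm, Zm, pow_zero, pow_one, Matrix.mul_apply, Fin.sum_univ_two, Matrix.one_apply]

lemma conjZ (a b : Fin 2) :
    (Zm ^ a.val * Xm ^ b.val) * Zm * (Xm ^ b.val * Zm ^ a.val) = ((-1:ℂ) ^ b.val) • Zm := by
  fin_cases a <;> fin_cases b <;>
    · ext i j; fin_cases i <;> fin_cases j <;>
      simp [Xm, Zm, pow_zero, pow_one, Matrix.mul_apply, Fin.sum_univ_two, Matrix.one_apply]

lemma conjI (a b : Fin 2) :
    (Zm ^ a.val * Xm ^ b.val) * ((1 : Matrix (Fin 2) (Fin 2) ℂ)) * (Xm ^ b.val * Zm ^ a.val) = 1 := by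
  fin_cases a <;> fin_cases b <;>
    · ext i j; fin_cases i <;> fin_cases j <;>
      simp [Xm, Zm, pow_zero, pow_one, Matrix.mul_apply, Fin.sum_univ_two, Matrix.one_apply]

lemma conjI' (a b : Fin 2) :
    (Zm ^ a.val * Xm ^ b.val) * (Xm ^ b.val * Zm ^ a.val) = 1 := by
  fin_cases a <;> fin_cases b <;>
    · ext i j; fin_cases i <;> fin_cases j <;>
      simp [Xm, Zm, pow_zero, pow_one, Matrix.mul_apply, Fin.sum_univ_two, Matrix.one_apply]

lemma XZpow_herm (a b : Fin 2) : (Xm ^ b.val * Zm ^ a.val)ᴴ = Zm ^ a.val * Xm ^ b.val := by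
  rw [conjTranspose_mul, conjTranspose_pow, conjTranspose_pow, Xm_herm, Zm_herm]

lemma neg_one_pow_fin_add (a b : Fin 2) :
    ((-1:ℂ)) ^ ((a + b).val) = (-1:ℂ) ^ a.val * (-1:ℂ) ^ b.val := by
  fin_cases a <;> fin_cases b <;> simp <;> norm_num

-- Part B : N-qubit operator identities

lemma Zm_apply (d e : Fin 2) : Zm d e = if d = e then ((-1:ℂ) ^ d.val) else 0 := by
  fin_cases d <;> fin_cases e <;> simp [Zm]

lemma phiHM_zero (m : Fin N → Fin 2) : phiHM 0 m = ketv m := by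
  simp [phiHM, pow_zero, Matrix.one_mulVec]

lemma projHM_zero_apply (m a b : Fin N → Fin 2) :
    projHM 0 m a b = (if a = m then (1:ℂ) else 0) * (if b = m then 1 else 0) := by
  simp only [projHM, phiHM_zero, vecMulVec_apply, ketv, Pi.star_apply]
  split_ifs <;> simp

lemma sum_proj0 : ∑ m : Fin N → Fin 2, projHM 0 m = 1 := by
  ext a b
  rw [Matrix.sum_apply, Matrix.one_apply]
  rcases eq_or_ne a b with rfl | hab
  · rw [if_pos rfl, Finset.sum_eq_single a
      (fun m _ hm => by simp [projHM_zero_apply, Ne.symm hm]) (by simp)]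
    simp [projHM_zero_apply]
  · rw [if_neg hab]
    refine Finset.sum_eq_zero fun m _ => ?_
    rw [projHM_zero_apply]
    rcases eq_or_ne a m with rfl | h
    · rw [if_neg (fun h' : b = a => hab h'.symm)]; ring
    · rw [if_neg h]; ring

lemma prod_orcond {i j : Fin N} (hij : i ≠ j) (f : Fin N → ℂ) :
    (∏ k, if k = i ∨ k = j then f k else 1) = f i * f j := by
  rw [Finset.prod_congr rfl fun k _ =>
      (by simp [Finset.mem_insert] :
        (if k = i ∨ k = j then f k else 1) = if k ∈ ({i,j}:Finset (Fin N)) then f k else 1),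
    Finset.prod_ite_mem, Finset.univ_inter, Finset.prod_pair hij]

lemma sum_sign_proj0 {i j : Fin N} (hij : i ≠ j) :
    ∑ m : Fin N → Fin 2, ((-1:ℂ) ^ ((m i).val + (m j).val)) • projHM 0 m = ZZt i j := by
  ext a b
  rw [Matrix.sum_apply]
  simp only [Matrix.smul_apply, projHM_zero_apply, smul_eq_mul]
  rcases eq_or_ne a b with rfl | hab
  · rw [Finset.sum_eq_single a
      (fun m _ hm => by simp [Ne.symm hm]) (by simp)]
    simp only [eq_self_iff_true, if_true, mul_one]
    have hz : ZZt i j a a = (-1:ℂ) ^ (a i).val * (-1:ℂ) ^ (a j).val := by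
      rw [ZZt, tens, Matrix.of_apply, ← prod_orcond hij (fun k => ((-1:ℂ) ^ (a k).val))]
      refine Finset.prod_congr rfl fun k _ => ?_
      by_cases hk : k = i ∨ k = j
      · simp only [if_pos hk, Zm_apply, eq_self_iff_true, if_true]
      · simp only [if_neg hk, Matrix.one_apply_eq]
    rw [hz, pow_add]
  · rw [Finset.sum_eq_zero, eq_comm]
    · obtain ⟨k, hk⟩ : ∃ k, a k ≠ b k := by
        by_contra h; push_neg at h; exact hab (funext h)
      apply Finset.prod_eq_zero (Finset.mem_univ k)
      show (if k = i ∨ k = j then Zm else 1) (a k) (b k) = 0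
      by_cases h : k = i ∨ k = j
      · rw [if_pos h, Zm_apply, if_neg hk]
      · rw [if_neg h]; exact Matrix.one_apply_ne hk
    · intro m _
      rcases eq_or_ne a m with rfl | h
      · rw [if_neg (fun h' : b = a => hab h'.symm)]; ring
      · rw [if_neg h]; ring

lemma vecMulVec_mulVec_star {n m : Type*} [Fintype n] [Fintype m]
    (A : Matrix m n ℂ) (v : n → ℂ) :
    vecMulVec (A.mulVec v) (star (A.mulVec v)) = A * vecMulVec v (star v) * Aᴴ := by
  ext a b
  simp only [vecMulVec_apply, Pi.star_apply, Matrix.mulVec, dotProduct,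
    Matrix.mul_apply, conjTranspose_apply]
  rw [star_sum, Finset.sum_mul_sum]
  rw [Finset.sum_comm]
  refine Finset.sum_congr rfl fun c _ => ?_
  rw [Finset.sum_mul]
  refine Finset.sum_congr rfl fun d _ => ?_
  simp only [star_mul']
  ring

lemma Hall_herm : (Hall N)ᴴ = Hall N := by
  rw [Hall, tens_conjTranspose]; simp [Hm_herm]

lemma Hall_mul_Hall : Hall N * Hall N = 1 := by
  rw [Hall, tens_mul]; simp [Hm_mul_Hm, tens_one]

lemma Hall_ZZt_Hall (i j : Fin N) : Hall N * ZZt i j * Hall N = XXt i j := by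
  rw [Hall, ZZt, XXt]
  simp only [tens_mul]
  refine congrArg tens (funext fun k => ?_)
  by_cases h : k = i ∨ k = j
  · rw [if_pos h, if_pos h, Hm_Zm_Hm]
  · rw [if_neg h, if_neg h, mul_one, Hm_mul_Hm]

lemma projHM_one (m : Fin N → Fin 2) :
    projHM 1 m = Hall N * projHM 0 m * Hall N := by
  have h1 : phiHM 1 m = (Hall N).mulVec (ketv m) := by simp [phiHM, pow_one]
  rw [projHM, h1, vecMulVec_mulVec_star, Hall_herm, projHM, phiHM_zero]

lemma conj_XXt (x z : Fin N → Fin 2) {i j : Fin N} (hij : i ≠ j) :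
    (Zpow z * Xpow x) * XXt i j * (Xpow x * Zpow z)
      = ((-1:ℂ) ^ ((z i).val + (z j).val)) • XXt i j := by
  rw [Zpow, Xpow, XXt]
  simp only [tens_mul]
  have hf : (fun k => Zm ^ (z k).val * Xm ^ (x k).val * (if k = i ∨ k = j then Xm else 1)
      * (Xm ^ (x k).val * Zm ^ (z k).val))
      = fun k => (if k = i ∨ k = j then ((-1:ℂ) ^ (z k).val) else 1) •
          (if k = i ∨ k = j then Xm else 1) := by
    funext k
    by_cases h : k = i ∨ k = j
    · simp only [if_pos h]; exact conjX (z k) (x k)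
    · simp only [if_neg h, one_smul]; exact conjI (z k) (x k)
  rw [hf, tens_smul]
  congr 1
  rw [prod_orcond hij (fun k => ((-1:ℂ) ^ (z k).val)), pow_add]

lemma conj_ZZt (x z : Fin N → Fin 2) {i j : Fin N} (hij : i ≠ j) :
    (Zpow z * Xpow x) * ZZt i j * (Xpow x * Zpow z)
      = ((-1:ℂ) ^ ((x i).val + (x j).val)) • ZZt i j := by
  rw [Zpow, Xpow, ZZt]
  simp only [tens_mul]
  have hf : (fun k => Zm ^ (z k).val * Xm ^ (x k).val * (if k = i ∨ k = j then Zm else 1)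
      * (Xm ^ (x k).val * Zm ^ (z k).val))
      = fun k => (if k = i ∨ k = j then ((-1:ℂ) ^ (x k).val) else 1) •
          (if k = i ∨ k = j then Zm else 1) := by
    funext k
    by_cases h : k = i ∨ k = j
    · simp only [if_pos h]; exact conjZ (z k) (x k)
    · simp only [if_neg h, one_smul]; exact conjI (z k) (x k)
  rw [hf, tens_smul]
  congr 1
  rw [prod_orcond hij (fun k => ((-1:ℂ) ^ (x k).val)), pow_add]

lemma ZX_mul_XZ (x z : Fin N → Fin 2) : (Zpow z * Xpow x) * (Xpow x * Zpow z) = 1 := by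
  rw [Zpow, Xpow]
  simp only [tens_mul]
  rw [show (fun k => Zm ^ (z k).val * Xm ^ (x k).val * (Xm ^ (x k).val * Zm ^ (z k).val))
    = fun _ => (1 : Matrix (Fin 2) (Fin 2) ℂ) from funext fun k => conjI' (z k) (x k), tens_one]

lemma XZ_herm (x z : Fin N → Fin 2) : (Xpow x * Zpow z)ᴴ = Zpow z * Xpow x := by
  rw [Xpow, Zpow]
  simp only [tens_mul]
  rw [tens_conjTranspose]
  exact congrArg tens (funext fun k => XZpow_herm (z k) (x k))
-- Part C : plumbing

section Plumb
variable {B1 B2 : Type*} [Fintype B1] [Fintype B2] [DecidableEq B1] [DecidableEq B2]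

lemma sum_kron {ι : Type*} (s : Finset ι) (A : ι → Matrix B1 B1 ℂ) (B : Matrix B2 B2 ℂ) :
    (∑ i ∈ s, A i) ⊗ₖ B = ∑ i ∈ s, (A i) ⊗ₖ B := by
  ext ⟨a, b⟩ ⟨c, d⟩
  simp [Matrix.sum_apply, Finset.sum_mul]

lemma kron_sum {ι : Type*} (s : Finset ι) (A : Matrix B1 B1 ℂ) (B : ι → Matrix B2 B2 ℂ) :
    A ⊗ₖ (∑ i ∈ s, B i) = ∑ i ∈ s, A ⊗ₖ (B i) := by
  ext ⟨a, b⟩ ⟨c, d⟩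
  simp [Matrix.sum_apply, Finset.mul_sum]

lemma kron_sub (A : Matrix B1 B1 ℂ) (B C : Matrix B2 B2 ℂ) :
    A ⊗ₖ (B - C) = A ⊗ₖ B - A ⊗ₖ C := by
  ext ⟨a, b⟩ ⟨c, d⟩
  simp [mul_sub]

lemma kron_smul' (c : ℂ) (A : Matrix B1 B1 ℂ) (B : Matrix B2 B2 ℂ) :
    A ⊗ₖ (c • B) = c • (A ⊗ₖ B) := by
  ext ⟨a, b⟩ ⟨e, d⟩
  simp [Matrix.smul_apply]
  ring

lemma kron_conjTranspose (A : Matrix B1 B1 ℂ) (B : Matrix B2 B2 ℂ) :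
    (A ⊗ₖ B)ᴴ = Aᴴ ⊗ₖ Bᴴ := by
  ext ⟨a, b⟩ ⟨c, d⟩
  simp [conjTranspose_apply, mul_comm]

lemma trace_mul_trB2 (P : Matrix B1 B1 ℂ) (A : Matrix (B1 × B2) (B1 × B2) ℂ) :
    (P * trB2 A).trace = ((P ⊗ₖ (1 : Matrix B2 B2 ℂ)) * A).trace := by
  simp only [Matrix.trace, Matrix.diag, Matrix.mul_apply, trB2, Matrix.of_apply,
    kroneckerMap_apply, Fintype.sum_prod_type, Matrix.one_apply, Finset.mul_sum,
    mul_ite, ite_mul, one_mul, mul_one, zero_mul, mul_zero, Finset.sum_ite_eq,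
    Finset.sum_ite_eq', Finset.mem_univ, if_true, Finset.sum_ite_irrel, Finset.sum_const_zero]
  exact Finset.sum_congr rfl fun x _ => Finset.sum_comm

lemma trace_mul_trB1 (H : Matrix B2 B2 ℂ) (A : Matrix (B1 × B2) (B1 × B2) ℂ) :
    (H * trB1 A).trace = (((1 : Matrix B1 B1 ℂ) ⊗ₖ H) * A).trace := by
  simp only [Matrix.trace, Matrix.diag, Matrix.mul_apply, trB1, Matrix.of_apply,
    kroneckerMap_apply, Fintype.sum_prod_type, Matrix.one_apply, Finset.mul_sum,
    mul_ite, ite_mul, one_mul, mul_one, zero_mul, mul_zero, Finset.sum_ite_eq,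
    Finset.sum_ite_eq', Finset.mem_univ, if_true, Finset.sum_ite_irrel, Finset.sum_const_zero]
  exact (Finset.sum_congr rfl fun x _ => Finset.sum_comm).trans Finset.sum_comm

lemma trace_trB1 (A : Matrix (B1 × B2) (B1 × B2) ℂ) : (trB1 A).trace = A.trace := by
  simp only [Matrix.trace, Matrix.diag, trB1, Matrix.of_apply, Fintype.sum_prod_type]
  exact Finset.sum_comm

lemma star_ite (c : Prop) [Decidable c] (x y : ℂ) :
    star (if c then x else y) = if c then star x else star y := apply_ite star c x y

lemma trB1_psd {A : Matrix (B1 × B2) (B1 × B2) ℂ} (hA : A.PosSemidef) :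
    (trB1 A).PosSemidef := by
  refine Matrix.PosSemidef.of_dotProduct_mulVec_nonneg ?_ ?_
  · ext b d
    simp only [conjTranspose_apply, trB1, Matrix.of_apply]
    rw [star_sum]
    refine Finset.sum_congr rfl fun a _ => ?_
    rw [← conjTranspose_apply, hA.1]
  · intro v
    have h2 : ∀ a : B1, star (fun q : B1 × B2 => if q.1 = a then v q.2 else 0) ⬝ᵥ
        (A *ᵥ fun q : B1 × B2 => if q.1 = a then v q.2 else 0)
        = ∑ b : B2, ∑ d : B2, star (v b) * (A (a,b) (a,d) * v d) := fun a => by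
      simp only [dotProduct, Matrix.mulVec, dotProduct, Pi.star_apply, Fintype.sum_prod_type,
        star_ite, star_zero, ite_mul, mul_ite, zero_mul, mul_zero,
        Finset.sum_ite_irrel, Finset.sum_const_zero, Finset.sum_ite_eq,
        Finset.sum_ite_eq', Finset.mem_univ, if_true, Finset.mul_sum]
    have h1 : star v ⬝ᵥ (trB1 A *ᵥ v)
        = ∑ a : B1, ∑ b : B2, ∑ d : B2, star (v b) * (A (a,b) (a,d) * v d) := by
      simp only [dotProduct, Matrix.mulVec, dotProduct, Pi.star_apply, trB1, Matrix.of_apply,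
        Fintype.sum_prod_type, Finset.mul_sum, Finset.sum_mul, mul_assoc]
      exact (Finset.sum_congr rfl fun x _ => Finset.sum_comm).trans Finset.sum_comm
    rw [h1]
    exact Finset.sum_nonneg fun a _ => by rw [← h2 a]; exact hA.dotProduct_mulVec_nonneg _

lemma conjTranspose_mul_self_trace_zero {B : Matrix B1 B2 ℂ}
    (h : (Bᴴ * B).trace = 0) : B = 0 := by
  have hd : ∀ a : B2, (Bᴴ * B) a a = 0 := by
    intro a
    refine (Finset.sum_eq_zero_iff_of_nonneg fun c _ => ?_).mp h a (Finset.mem_univ a)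
    show (0:ℂ) ≤ (Bᴴ * B) c c
    have : (Bᴴ * B) c c = star (fun i => B i c) ⬝ᵥ (fun i => B i c) := by
      simp [Matrix.mul_apply, conjTranspose_apply, dotProduct]
    rw [this]
    exact dotProduct_star_self_nonneg _
  ext i a
  have h2 : star (fun i => B i a) ⬝ᵥ (fun i => B i a) = 0 := by
    rw [← hd a]; simp [Matrix.mul_apply, conjTranspose_apply, dotProduct]
  have := dotProduct_star_self_eq_zero.mp h2
  simpa using congrFun this i

lemma psd_of_trace_zero {A : Matrix B1 B1 ℂ} (hA : A.PosSemidef) (h : A.trace = 0) :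
    A = 0 := by
  have hs : (psdSqrt hA)ᴴ * psdSqrt hA = A := by
    rw [psdSqrt_herm hA, psdSqrt_mul_self hA]
  have : psdSqrt hA = 0 := conjTranspose_mul_self_trace_zero (by rw [hs, h])
  rw [← psdSqrt_mul_self hA, this, mul_zero]

lemma psd_sum {ι : Type*} (s : Finset ι) (F : ι → Matrix B1 B1 ℂ)
    (h : ∀ i ∈ s, (F i).PosSemidef) : (∑ i ∈ s, F i).PosSemidef := by
  classical
  induction s using Finset.induction_on with
  | empty => simpa using Matrix.PosSemidef.zero
  | insert _ _ hns ih =>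
    rw [Finset.sum_insert hns]
    exact ((h _ (Finset.mem_insert_self _ _)).add
      (ih fun i hi => h i (Finset.mem_insert_of_mem hi)))

end Plumb
-- Part D : projectors and Pprob reduction

lemma vecMulVec_self_mul {n : Type*} [Fintype n] (v : n → ℂ) :
    vecMulVec v (star v) * vecMulVec v (star v) = (star v ⬝ᵥ v) • vecMulVec v (star v) := by
  ext a b
  simp only [Matrix.mul_apply, vecMulVec_apply, Pi.star_apply, Matrix.smul_apply,
    dotProduct, smul_eq_mul, Finset.sum_mul]
  exact Finset.sum_congr rfl fun c _ => by ring

lemma projHM_herm (h : Fin 2) (m : Fin N → Fin 2) : (projHM h m)ᴴ = projHM h m := by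
  ext a b
  simp only [projHM, conjTranspose_apply, vecMulVec_apply, Pi.star_apply, star_mul', star_star]
  ring

lemma phi_norm (h : Fin 2) (m : Fin N → Fin 2) : star (phiHM h m) ⬝ᵥ phiHM h m = 1 := by
  fin_cases h
  · show star (phiHM 0 m) ⬝ᵥ phiHM 0 m = 1
    rw [phiHM_zero]
    simp [ketv, dotProduct, Pi.star_apply, star_ite]
  · show star (phiHM 1 m) ⬝ᵥ phiHM 1 m = 1
    have hφ : phiHM 1 m = fun a => Hall N a m := by
      funext a
      simp only [phiHM, pow_one, Matrix.mulVec, dotProduct, ketv, mul_ite, mul_one, mul_zero]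
      simp
    rw [hφ]
    have h2 : (∑ a, star (Hall N a m) * Hall N a m) = ((Hall N)ᴴ * Hall N) m m := by
      simp [Matrix.mul_apply, conjTranspose_apply]
    simp only [dotProduct, Pi.star_apply]
    rw [h2, Hall_herm, Hall_mul_Hall, Matrix.one_apply_eq]

lemma projHM_idem (h : Fin 2) (m : Fin N → Fin 2) :
    projHM h m * projHM h m = projHM h m := by
  rw [projHM, vecMulVec_self_mul, phi_norm, one_smul]

lemma Pprob_key {M : ℕ}
    (ρ : Matrix ((Fin M → Fin 2) × (Fin N → Fin 2)) ((Fin M → Fin 2) × (Fin N → Fin 2)) ℂ)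
    (hρ : ρ.PosSemidef) (Q : Matrix (Fin M → Fin 2) (Fin M → Fin 2) ℂ)
    (h : Fin 2) (m : Fin N → Fin 2) :
    Pprob ρ h m * (Q * sigmaHM ρ h m).trace
      = 2⁻¹ * ((Q ⊗ₖ projHM h m) * ρ).trace := by
  have hkron : ∀ R : Matrix (Fin M → Fin 2) (Fin M → Fin 2) ℂ,
      ((R ⊗ₖ (1 : Matrix (Fin N → Fin 2) (Fin N → Fin 2) ℂ)) *
        (((1 : Matrix (Fin M → Fin 2) (Fin M → Fin 2) ℂ) ⊗ₖ projHM h m) * ρ *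
         ((1 : Matrix (Fin M → Fin 2) (Fin M → Fin 2) ℂ) ⊗ₖ projHM h m))).trace
        = ((R ⊗ₖ projHM h m) * ρ).trace := by
    intro R
    rw [← Matrix.mul_assoc, ← Matrix.mul_assoc, ← mul_kronecker_mul, mul_one, one_mul,
      Matrix.trace_mul_comm, ← Matrix.mul_assoc, ← mul_kronecker_mul, one_mul,
      projHM_idem]
  have htrE : (((1 : Matrix (Fin M → Fin 2) (Fin M → Fin 2) ℂ) ⊗ₖ projHM h m) * ρ *
         ((1 : Matrix (Fin M → Fin 2) (Fin M → Fin 2) ℂ) ⊗ₖ projHM h m)).trace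
      = 2 * Pprob ρ h m := by
    rw [Matrix.trace_mul_comm, ← Matrix.mul_assoc, ← mul_kronecker_mul, one_mul,
      projHM_idem, Pprob]
    ring
  have hπH : (((1 : Matrix (Fin M → Fin 2) (Fin M → Fin 2) ℂ) ⊗ₖ projHM h m))ᴴ
      = (1 : Matrix (Fin M → Fin 2) (Fin M → Fin 2) ℂ) ⊗ₖ projHM h m := by
    rw [kron_conjTranspose, conjTranspose_one, projHM_herm]
  rcases eq_or_ne (Pprob ρ h m) 0 with h0 | h0
  · have hEpsd : (((1 : Matrix (Fin M → Fin 2) (Fin M → Fin 2) ℂ) ⊗ₖ projHM h m) * ρ *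
         ((1 : Matrix (Fin M → Fin 2) (Fin M → Fin 2) ℂ) ⊗ₖ projHM h m)).PosSemidef := by
      have := hρ.mul_mul_conjTranspose_same
        (B := (1 : Matrix (Fin M → Fin 2) (Fin M → Fin 2) ℂ) ⊗ₖ projHM h m)
      rwa [hπH] at this
    have hE0 : (((1 : Matrix (Fin M → Fin 2) (Fin M → Fin 2) ℂ) ⊗ₖ projHM h m) * ρ *
         ((1 : Matrix (Fin M → Fin 2) (Fin M → Fin 2) ℂ) ⊗ₖ projHM h m)) = 0 :=
      psd_of_trace_zero hEpsd (by rw [htrE, h0, mul_zero])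
    rw [h0, zero_mul, ← hkron Q, hE0, Matrix.mul_zero, Matrix.trace_zero, mul_zero]
  · rw [sigmaHM, Matrix.mul_smul, Matrix.trace_smul, smul_eq_mul, trace_mul_trB2, hkron Q]
    field_simp
-- Part E : the central identity

variable {p s : Fin N × Fin N → ℝ}

lemma pairs_ne {q : Fin N × Fin N} (hq : q ∈ pairs N) : q.1 ≠ q.2 := by
  have := (Finset.mem_filter.mp hq).2
  exact ne_of_lt this

lemma wgt_add (δ m : Fin N → Fin 2) :
    wgt p s (fun i => m i + δ i)
      = ∑ q ∈ pairs N, ((p q : ℂ)/2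
          - ((p q : ℂ) * (s q : ℂ) * (-1:ℂ) ^ ((δ q.1).val + (δ q.2).val))/2
            * (-1:ℂ) ^ ((m q.1).val + (m q.2).val)) := by
  rw [wgt]
  refine Finset.sum_congr rfl fun q _ => ?_
  simp only [pow_add, neg_one_pow_fin_add]
  ring

lemma sum_wgt_proj0_gen (δ : Fin N → Fin 2) :
    ∑ m : Fin N → Fin 2, wgt p s (fun i => m i + δ i) • projHM 0 m
      = ∑ q ∈ pairs N, (((p q : ℂ)/2) • (1 : Matrix (Fin N → Fin 2) (Fin N → Fin 2) ℂ)
          - (((p q : ℂ) * (s q : ℂ) * (-1:ℂ) ^ ((δ q.1).val + (δ q.2).val))/2) •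
              ZZt q.1 q.2) := by
  calc ∑ m : Fin N → Fin 2, wgt p s (fun i => m i + δ i) • projHM 0 m
      = ∑ m : Fin N → Fin 2, ∑ q ∈ pairs N,
          (((p q : ℂ)/2) • projHM 0 m
            - (((p q : ℂ) * (s q : ℂ) * (-1:ℂ) ^ ((δ q.1).val + (δ q.2).val))/2) •
                (((-1:ℂ) ^ ((m q.1).val + (m q.2).val)) • projHM 0 m)) := by
        refine Finset.sum_congr rfl fun m _ => ?_
        rw [wgt_add, Finset.sum_smul]
        refine Finset.sum_congr rfl fun q _ => ?_
        rw [sub_smul, smul_smul]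
    _ = ∑ q ∈ pairs N, (((p q : ℂ)/2) • (∑ m : Fin N → Fin 2, projHM 0 m)
          - (((p q : ℂ) * (s q : ℂ) * (-1:ℂ) ^ ((δ q.1).val + (δ q.2).val))/2) •
            (∑ m : Fin N → Fin 2, ((-1:ℂ) ^ ((m q.1).val + (m q.2).val)) • projHM 0 m)) := by
        rw [Finset.sum_comm]
        refine Finset.sum_congr rfl fun q _ => ?_
        rw [Finset.sum_sub_distrib, Finset.smul_sum, Finset.smul_sum]
    _ = _ := by
        refine Finset.sum_congr rfl fun q hq => ?_
        rw [sum_proj0, sum_sign_proj0 (pairs_ne hq)]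

lemma mprime_zero (m x z : Fin N → Fin 2) : mprime 0 m x z = fun i => m i + x i := by
  funext i; simp [mprime]

lemma mprime_one (m x z : Fin N → Fin 2) : mprime 1 m x z = fun i => m i + z i := by
  funext i; simp [mprime]

lemma sum_wgt_proj_h1 (x z : Fin N → Fin 2) :
    ∑ m : Fin N → Fin 2, wgt p s (mprime 1 m x z) • projHM 1 m
      = ∑ q ∈ pairs N, (((p q : ℂ)/2) • (1 : Matrix (Fin N → Fin 2) (Fin N → Fin 2) ℂ)
          - (((p q : ℂ) * (s q : ℂ) * (-1:ℂ) ^ ((z q.1).val + (z q.2).val))/2) •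
              XXt q.1 q.2) := by
  have step : ∑ m : Fin N → Fin 2, wgt p s (mprime 1 m x z) • projHM 1 m
      = Hall N * (∑ m : Fin N → Fin 2, wgt p s (fun i => m i + z i) • projHM 0 m) * Hall N := by
    rw [Finset.mul_sum, Finset.sum_mul]
    refine Finset.sum_congr rfl fun m _ => ?_
    rw [mprime_one, projHM_one, Matrix.mul_smul, Matrix.smul_mul]
  rw [step, sum_wgt_proj0_gen, Finset.mul_sum, Finset.sum_mul]
  refine Finset.sum_congr rfl fun q hq => ?_
  rw [Matrix.mul_sub, Matrix.sub_mul, Matrix.mul_smul, Matrix.smul_mul,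
    Matrix.mul_smul, Matrix.smul_mul, Matrix.mul_one, Hall_mul_Hall,
    Hall_ZZt_Hall]

lemma conj_ham (x z : Fin N → Fin 2) :
    (Zpow z * Xpow x) * ham p s * (Xpow x * Zpow z)
      = ∑ q ∈ pairs N, ((p q : ℂ) / 2) •
          ((2:ℂ)⁻¹ • (1 + ((s q : ℂ) * (-1:ℂ) ^ ((z q.1).val + (z q.2).val)) • XXt q.1 q.2)
            + (2:ℂ)⁻¹ • (1 + ((s q : ℂ) * (-1:ℂ) ^ ((x q.1).val + (x q.2).val)) • ZZt q.1 q.2)) := by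
  rw [ham, Finset.mul_sum, Finset.sum_mul]
  refine Finset.sum_congr rfl fun q hq => ?_
  rw [Matrix.mul_smul, Matrix.smul_mul]
  congr 1
  rw [Matrix.mul_add, Matrix.add_mul]
  congr 1
  · rw [Matrix.mul_smul, Matrix.smul_mul]
    congr 1
    rw [Matrix.mul_add, Matrix.add_mul, Matrix.mul_one, ZX_mul_XZ,
      Matrix.mul_smul, Matrix.smul_mul, conj_XXt x z (pairs_ne hq), smul_smul]
  · rw [Matrix.mul_smul, Matrix.smul_mul]
    congr 1
    rw [Matrix.mul_add, Matrix.add_mul, Matrix.mul_one, ZX_mul_XZ,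
      Matrix.mul_smul, Matrix.smul_mul, conj_ZZt x z (pairs_ne hq), smul_smul]

lemma central (hpsum : ∑ q ∈ pairs N, p q = 1) (x z : Fin N → Fin 2) :
    (2:ℂ)⁻¹ • ∑ h : Fin 2, ∑ m : Fin N → Fin 2, wgt p s (mprime h m x z) • projHM h m
      = (Zpow z * Xpow x) * (1 - ham p s) * (Xpow x * Zpow z) := by
  have hone : ∀ H : Fin N × Fin N → Matrix (Fin N → Fin 2) (Fin N → Fin 2) ℂ,
      (1 : Matrix (Fin N → Fin 2) (Fin N → Fin 2) ℂ) - ∑ q ∈ pairs N, H q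
        = ∑ q ∈ pairs N, ((p q : ℂ) • (1 : Matrix (Fin N → Fin 2) (Fin N → Fin 2) ℂ) - H q) := by
    intro H
    rw [Finset.sum_sub_distrib, ← Finset.sum_smul,
      show (∑ q ∈ pairs N, (p q : ℂ)) = ((∑ q ∈ pairs N, p q : ℝ) : ℂ) by push_cast; rfl,
      hpsum, Complex.ofReal_one, one_smul]
  have hmm0 : ∀ m, mprime 0 m x z = fun i => m i + x i := fun m => mprime_zero m x z
  rw [Fin.sum_univ_two]
  rw [show (∑ m : Fin N → Fin 2, wgt p s (mprime 0 m x z) • projHM 0 m)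
      = ∑ m : Fin N → Fin 2, wgt p s (fun i => m i + x i) • projHM 0 m from
    Finset.sum_congr rfl fun m _ => by rw [hmm0 m]]
  rw [sum_wgt_proj0_gen, sum_wgt_proj_h1]
  rw [Matrix.mul_sub, Matrix.sub_mul, Matrix.mul_one, ZX_mul_XZ, conj_ham]
  rw [← Finset.sum_add_distrib, Finset.smul_sum, hone]
  refine Finset.sum_congr rfl fun q hq => ?_
  module
-- Part F : assembly helpers

lemma trace_weighted {M : ℕ}
    (ρ : Matrix ((Fin M → Fin 2) × (Fin N → Fin 2)) ((Fin M → Fin 2) × (Fin N → Fin 2)) ℂ)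
    (Q : Matrix (Fin M → Fin 2) (Fin M → Fin 2) ℂ) (x z : Fin N → Fin 2) :
    ∑ h : Fin 2, ∑ m : Fin N → Fin 2,
        2⁻¹ * ((Q ⊗ₖ projHM h m) * ρ).trace * wgt p s (mprime h m x z)
      = ((Q ⊗ₖ ((2:ℂ)⁻¹ • ∑ h : Fin 2, ∑ m : Fin N → Fin 2,
            wgt p s (mprime h m x z) • projHM h m)) * ρ).trace := by
  rw [kron_smul', Matrix.smul_mul, Matrix.trace_smul, smul_eq_mul, kron_sum, Finset.sum_mul,
    Matrix.trace_sum, Finset.mul_sum]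
  refine Finset.sum_congr rfl fun h _ => ?_
  rw [kron_sum, Finset.sum_mul, Matrix.trace_sum, Finset.mul_sum]
  refine Finset.sum_congr rfl fun m _ => ?_
  rw [kron_smul', Matrix.smul_mul, Matrix.trace_smul, smul_eq_mul]
  ring

end S13

/-- computational-soundness identity: the acceptance probability
`∑_{h,m} P(h,m) ∑_{x,z} Tr(Π_{x,z}σ_{h,m}) ∑_{i<j} p_{ij}(1−s_{ij}(−1)^{m'_i+m'_j})/2`
equals `1 − Tr(𝓗 η)`, and `η` is a density operator on `N` qubits. -/
theorem statement13 (M N : ℕ) (hN : 2 ≤ N) (p s : Fin N × Fin N → ℝ)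
    (hp : ∀ q ∈ pairs N, 0 < p q) (hpsum : ∑ q ∈ pairs N, p q = 1)
    (hs : ∀ q ∈ pairs N, s q = 1 ∨ s q = -1)
    (ρ : Matrix ((Fin M → Fin 2) × (Fin N → Fin 2))
      ((Fin M → Fin 2) × (Fin N → Fin 2)) ℂ)
    (hρ : ρ.PosSemidef) (hρtr : ρ.trace = 1)
    (Pv : (Fin N → Fin 2) × (Fin N → Fin 2) → Matrix (Fin M → Fin 2) (Fin M → Fin 2) ℂ)
    (hpos : ∀ xz, (Pv xz).PosSemidef)
    (hsum : ∑ xz : (Fin N → Fin 2) × (Fin N → Fin 2), Pv xz = 1) :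
    (∑ h : Fin 2, ∑ m : Fin N → Fin 2, Pprob ρ h m *
        ∑ xz : (Fin N → Fin 2) × (Fin N → Fin 2),
          (Pv xz * sigmaHM ρ h m).trace * wgt p s (mprime h m xz.1 xz.2))
      = 1 - (ham p s * etaSt ρ Pv hpos).trace ∧
    (etaSt ρ Pv hpos).PosSemidef ∧ (etaSt ρ Pv hpos).trace = 1 := by
  have hsq : ∀ xz, psdSqrt (hpos xz) * psdSqrt (hpos xz) = Pv xz := fun xz => psdSqrt_mul_self (hpos xz)
  have hsqH : ∀ xz, (psdSqrt (hpos xz))ᴴ = psdSqrt (hpos xz) := fun xz => psdSqrt_herm (hpos xz)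
  have hterm : ∀ (H : Matrix (Fin N → Fin 2) (Fin N → Fin 2) ℂ)
      (xz : (Fin N → Fin 2) × (Fin N → Fin 2)),
      (((1 : Matrix (Fin M → Fin 2) (Fin M → Fin 2) ℂ) ⊗ₖ H) *
        ((psdSqrt (hpos xz) ⊗ₖ (Xpow xz.1 * Zpow xz.2)) * ρ *
         (psdSqrt (hpos xz) ⊗ₖ (Zpow xz.2 * Xpow xz.1)))).trace
      = ((Pv xz ⊗ₖ ((Zpow xz.2 * Xpow xz.1) * H * (Xpow xz.1 * Zpow xz.2))) * ρ).trace := by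
    intro H xz
    rw [← Matrix.mul_assoc, ← Matrix.mul_assoc, Matrix.trace_mul_comm,
      ← Matrix.mul_assoc, ← Matrix.mul_assoc, ← mul_kronecker_mul, mul_one,
      ← mul_kronecker_mul, hsq]
  have h1 : ∀ xz : (Fin N → Fin 2) × (Fin N → Fin 2),
      ((psdSqrt (hpos xz) ⊗ₖ (Xpow xz.1 * Zpow xz.2)) * ρ *
       (psdSqrt (hpos xz) ⊗ₖ (Zpow xz.2 * Xpow xz.1))).trace
      = ((Pv xz ⊗ₖ (1 : Matrix (Fin N → Fin 2) (Fin N → Fin 2) ℂ)) * ρ).trace := by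
    intro xz
    rw [Matrix.trace_mul_comm, ← Matrix.mul_assoc, ← mul_kronecker_mul, hsq, S13.ZX_mul_XZ]
  have hPv1 : ∑ xz : (Fin N → Fin 2) × (Fin N → Fin 2),
      ((Pv xz ⊗ₖ (1 : Matrix (Fin N → Fin 2) (Fin N → Fin 2) ℂ)) * ρ).trace = 1 := by
    rw [← Matrix.trace_sum, ← Finset.sum_mul, ← S13.sum_kron, hsum, one_kronecker_one,
      Matrix.one_mul, hρtr]
  have heta : (ham p s * etaSt ρ Pv hpos).trace
      = ∑ xz : (Fin N → Fin 2) × (Fin N → Fin 2),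
          ((Pv xz ⊗ₖ ((Zpow xz.2 * Xpow xz.1) * ham p s * (Xpow xz.1 * Zpow xz.2))) * ρ).trace := by
    rw [etaSt, S13.trace_mul_trB1, Finset.mul_sum, Matrix.trace_sum]
    exact Finset.sum_congr rfl fun xz _ => hterm (ham p s) xz
  refine ⟨?_, ?_, ?_⟩
  · calc (∑ h : Fin 2, ∑ m : Fin N → Fin 2, Pprob ρ h m *
        ∑ xz : (Fin N → Fin 2) × (Fin N → Fin 2),
          (Pv xz * sigmaHM ρ h m).trace * wgt p s (mprime h m xz.1 xz.2))
        = ∑ h : Fin 2, ∑ m : Fin N → Fin 2, ∑ xz : (Fin N → Fin 2) × (Fin N → Fin 2),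
            2⁻¹ * ((Pv xz ⊗ₖ projHM h m) * ρ).trace * wgt p s (mprime h m xz.1 xz.2) := by
          refine Finset.sum_congr rfl fun h _ => Finset.sum_congr rfl fun m _ => ?_
          rw [Finset.mul_sum]
          refine Finset.sum_congr rfl fun xz _ => ?_
          rw [← mul_assoc, S13.Pprob_key ρ hρ (Pv xz) h m]
      _ = ∑ xz : (Fin N → Fin 2) × (Fin N → Fin 2), ∑ h : Fin 2, ∑ m : Fin N → Fin 2,
            2⁻¹ * ((Pv xz ⊗ₖ projHM h m) * ρ).trace * wgt p s (mprime h m xz.1 xz.2) :=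
          (Finset.sum_congr rfl fun h _ => Finset.sum_comm).trans Finset.sum_comm
      _ = ∑ xz : (Fin N → Fin 2) × (Fin N → Fin 2),
            ((Pv xz ⊗ₖ ((Zpow xz.2 * Xpow xz.1) * (1 - ham p s) * (Xpow xz.1 * Zpow xz.2)))
              * ρ).trace := by
          refine Finset.sum_congr rfl fun xz _ => ?_
          rw [S13.trace_weighted ρ (Pv xz) xz.1 xz.2, S13.central hpsum xz.1 xz.2]
      _ = ∑ xz : (Fin N → Fin 2) × (Fin N → Fin 2),
            (((Pv xz ⊗ₖ (1 : Matrix (Fin N → Fin 2) (Fin N → Fin 2) ℂ)) * ρ).trace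
              - ((Pv xz ⊗ₖ ((Zpow xz.2 * Xpow xz.1) * ham p s * (Xpow xz.1 * Zpow xz.2)))
                  * ρ).trace) := by
          refine Finset.sum_congr rfl fun xz _ => ?_
          rw [Matrix.mul_sub, Matrix.mul_one, Matrix.sub_mul, S13.ZX_mul_XZ,
            S13.kron_sub, Matrix.sub_mul, Matrix.trace_sub]
      _ = 1 - (ham p s * etaSt ρ Pv hpos).trace := by
          rw [Finset.sum_sub_distrib, hPv1, heta]
  · apply S13.trB1_psd
    apply S13.psd_sum
    intro xz _
    have := hρ.mul_mul_conjTranspose_same (B := psdSqrt (hpos xz) ⊗ₖ (Xpow xz.1 * Zpow xz.2))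
    rwa [S13.kron_conjTranspose, hsqH, S13.XZ_herm] at this
  · rw [etaSt, S13.trace_trB1, Matrix.trace_sum,
      Finset.sum_congr rfl fun xz _ => h1 xz, hPv1]

end
end
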